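/- Let p ∈ [2,∞) be a real number and let f : [0,1] → ℝ be twice continuously differentiable with f(0) = f(1) = 0. Then the integration-by-parts identity ∫₀¹ f''(ξ) · f(ξ) · |f(ξ)|^{p−2} dξ = −(p−1) · ∫₀¹ f'(ξ)² · |f(ξ)|^{p−2} dξ holds. -/

import Mathlib

open Real Set Filter MeasureTheory

/-!
Integrate by parts with `u = f'` and `v = φ ∘ f`, where `φ y = y |y|^{p-2}`. Since `p - 2 ≥ 0`,
`φ` is `C¹` on all of `ℝ` with `φ' y = (p - 1) |y|^{p-2}`: away from `0` this is the product
rule, and at `0` the difference quotient of `φ` is `|h|^{p-2}`, which is continuous at `0`.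
The boundary term `f' · φ(f)` vanishes because `f(0) = f(1) = 0`.
-/

theorem hasDerivAt_mul_of_continuousAt_zero {φ : ℝ → ℝ} (hφ : ContinuousAt φ 0) :
    HasDerivAt (fun x => x * φ x) (φ 0) 0 := by
  rw [hasDerivAt_iff_tendsto_slope_zero]
  refine (hφ.tendsto.comp (tendsto_nhdsWithin_of_tendsto_nhds tendsto_id)).congr' ?_
  filter_upwards [self_mem_nhdsWithin] with t (ht : t ≠ 0)
  simp [ht]

theorem hasDerivAt_abs_rpow_of_ne_zero {y : ℝ} (hy : y ≠ 0) (r : ℝ) :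
    HasDerivAt (fun x => |x| ^ r) (r * |y| ^ (r - 1) * SignType.sign y) y :=
  (Real.hasDerivAt_rpow_const (Or.inl (abs_ne_zero.mpr hy))).comp y (hasDerivAt_abs hy)

theorem hasDerivAt_mul_abs_rpow {r : ℝ} (hr : 0 ≤ r) (y : ℝ) :
    HasDerivAt (fun x => x * |x| ^ r) ((r + 1) * |y| ^ r) y := by
  rcases eq_or_ne y 0 with rfl | hy
  · have hcont : ContinuousAt (fun x : ℝ => |x| ^ r) 0 :=
      continuous_abs.continuousAt.rpow_const (Or.inr hr)
    convert hasDerivAt_mul_of_continuousAt_zero hcont using 1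
    rcases hr.eq_or_lt with rfl | hr
    · simp
    · simp [zero_rpow hr.ne']
  · have hsign : y * SignType.sign y = |y| := by
      rcases hy.lt_or_gt with h | h <;> simp [h, abs_of_neg, abs_of_pos]
    have hpow : |y| ^ (r - 1) * |y| = |y| ^ r := by
      rw [← rpow_add_one (abs_ne_zero.mpr hy)]; ring_nf
    refine ((hasDerivAt_id' y).mul (hasDerivAt_abs_rpow_of_ne_zero hy r)).congr_deriv ?_
    linear_combination (r * |y| ^ (r - 1)) * hsign + r * hpow

theorem integral_deriv_deriv_mul_comp_eq_neg {a b : ℝ} {f f' f'' φ φ' : ℝ → ℝ}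
    (hf : ∀ x ∈ uIcc a b, HasDerivAt f (f' x) x)
    (hf' : ∀ x ∈ uIcc a b, HasDerivAt f' (f'' x) x)
    (hf'' : IntervalIntegrable f'' volume a b)
    (hφ : ∀ y, HasDerivAt φ (φ' y) y) (hφ' : Continuous φ')
    (ha : φ (f a) = 0) (hb : φ (f b) = 0) :
    ∫ x in a..b, f'' x * φ (f x) = -∫ x in a..b, f' x ^ 2 * φ' (f x) := by
  have hfc : ContinuousOn f (uIcc a b) :=
    continuousOn_of_forall_continuousAt fun x hx => (hf x hx).continuousAt
  have hf'c : ContinuousOn f' (uIcc a b) :=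
    continuousOn_of_forall_continuousAt fun x hx => (hf' x hx).continuousAt
  have hcomp : ∀ x ∈ uIcc a b, HasDerivAt (φ ∘ f) (φ' (f x) * f' x) x :=
    fun x hx => (hφ (f x)).comp x (hf x hx)
  have hcomp' : IntervalIntegrable (fun x => φ' (f x) * f' x) volume a b :=
    ((hφ'.comp_continuousOn hfc).mul hf'c).intervalIntegrable
  have hparts := intervalIntegral.integral_mul_deriv_eq_deriv_mul hf' hcomp hf'' hcomp'
  simp only [Function.comp_apply, ha, hb, mul_zero, sub_zero, zero_sub] at hparts
  have hsq : ∫ x in a..b, f' x * (φ' (f x) * f' x) = ∫ x in a..b, f' x ^ 2 * φ' (f x) :=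
    intervalIntegral.integral_congr fun x _ => by ring
  linarith

/-- Integration by parts identity: for a real `p ∈ [2,∞)` and a twice continuously
differentiable `f : [0,1] → ℝ` (with first and second derivatives `f'` and `f''`)
vanishing at the endpoints,
`∫₀¹ f'' f |f|^{p-2} = -(p-1) ∫₀¹ (f')² |f|^{p-2}`.
The powers are real powers, so for `p = 2` one has `|f|^{p-2} = |f|^0 = 1`, and for
`p > 2` both integrands vanish wherever `f` vanishes. -/
theorem integration_by_parts_identity
    (p : ℝ) (hp : 2 ≤ p)
    (f f' f'' : ℝ → ℝ)
    (hf' : ∀ ξ ∈ Set.Icc (0 : ℝ) 1, HasDerivAt f (f' ξ) ξ)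
    (hf'' : ∀ ξ ∈ Set.Icc (0 : ℝ) 1, HasDerivAt f' (f'' ξ) ξ)
    (hcont : ContinuousOn f'' (Set.Icc (0 : ℝ) 1))
    (h0 : f 0 = 0) (h1 : f 1 = 0) :
    ∫ ξ in (0 : ℝ)..1, f'' ξ * f ξ * |f ξ| ^ (p - 2) =
      -(p - 1) * ∫ ξ in (0 : ℝ)..1, f' ξ ^ 2 * |f ξ| ^ (p - 2) := by
  have hr : 0 ≤ p - 2 := sub_nonneg.mpr hp
  rw [← uIcc_of_le zero_le_one] at hf' hf'' hcont
  have hparts := integral_deriv_deriv_mul_comp_eq_neg hf' hf'' hcont.intervalIntegrable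
    (hasDerivAt_mul_abs_rpow hr) ((continuous_abs.rpow_const fun _ => Or.inr hr).const_mul _)
    (by simp [h0]) (by simp [h1])
  simp only [← mul_assoc] at hparts
  rw [hparts, ← intervalIntegral.integral_const_mul, ← intervalIntegral.integral_neg]
  refine intervalIntegral.integral_congr fun ξ _ => ?_
  ring
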